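/- Let V be a finite-dimensional complex vector space, F, G, μ invertible linear operators on V, and R = (F ⊗ G) ∘ S where S is the swap. If R commutes with μ ⊗ μ, then there exists a nonzero scalar q ∈ ℂ such that Fμ = q μF and Gμ = q⁻¹ μG. -/

import Mathlib

/-!
Because `S` commutes with `μ ⊗ μ`, the hypothesis cancels to `(Fμ) ⊗ (Gμ) = (μF) ⊗ (μG)`, i.e.
`U ⊗ W = 1` for `U = (μF)⁻¹ Fμ` and `W = (μG)⁻¹ Gμ`. Evaluating `U ⊗ W` on `x ⊗ y` and contracting
one factor against a functional that is `1` on `x` (resp. `y`) shows that `U` and `W` are scalars;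
their product is then `1`.
-/

open TensorProduct

variable {V : Type*} [AddCommGroup V] [Module ℂ V]

/-- The swap operator `S : a ⊗ b ↦ b ⊗ a`. -/
noncomputable def swapOp : Module.End ℂ (V ⊗[ℂ] V) :=
  (TensorProduct.comm ℂ V V).toLinearMap

namespace TensorProduct

variable {K M N : Type*} [Field K] [AddCommGroup M] [Module K M] [AddCommGroup N] [Module K N]
  {X : Module.End K M} {Y : Module.End K N}

theorem smul_eq_one_of_map_eq_one_left (h : map X Y = 1) {y : N} {φ : Module.Dual K N}
    (hφ : φ y = 1) : φ (Y y) • X = 1 := by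
  ext x
  have := congr(TensorProduct.rid K M (LinearMap.lTensor M φ ($h (x ⊗ₜ y))))
  simpa [hφ] using this

theorem smul_eq_one_of_map_eq_one_right (h : map X Y = 1) {x : M} {ψ : Module.Dual K M}
    (hψ : ψ x = 1) : ψ (X x) • Y = 1 := by
  ext y
  have := congr(TensorProduct.lid K N (LinearMap.rTensor N ψ ($h (x ⊗ₜ y))))
  simpa [hψ] using this

theorem exists_eq_smul_one_of_map_eq_one [Nontrivial M] [Nontrivial N] (h : map X Y = 1) :
    ∃ q : K, q ≠ 0 ∧ X = q • 1 ∧ Y = q⁻¹ • 1 := by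
  obtain ⟨x, hx⟩ := exists_ne (0 : M)
  obtain ⟨y, hy⟩ := exists_ne (0 : N)
  obtain ⟨ψ, hψ⟩ := Module.Projective.exists_dual_eq_one K hx
  obtain ⟨φ, hφ⟩ := Module.Projective.exists_dual_eq_one K hy
  set c := φ (Y y)
  have hcX : c • X = 1 := smul_eq_one_of_map_eq_one_left h hφ
  have hc : c ≠ 0 := by
    rintro hc
    simp [hc] at hcX
  have hX : X = c⁻¹ • 1 := by rw [← hcX, inv_smul_smul₀ hc]
  have hY : c⁻¹ • Y = 1 := by
    simpa [hX, hψ] using smul_eq_one_of_map_eq_one_right h hψ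
  refine ⟨c⁻¹, inv_ne_zero hc, hX, ?_⟩
  rw [inv_inv, ← hY, smul_inv_smul₀ hc]

theorem exists_eq_smul_of_map_eq_map [Nontrivial M] [Nontrivial N] {A C : Module.End K M}
    {B D : Module.End K N} (hC : IsUnit C) (hD : IsUnit D) (h : map A B = map C D) :
    ∃ q : K, q ≠ 0 ∧ A = q • C ∧ B = q⁻¹ • D := by
  obtain ⟨C, rfl⟩ := hC
  obtain ⟨D, rfl⟩ := hD
  have h1 : map (↑C⁻¹ * A : Module.End K M) (↑D⁻¹ * B : Module.End K N) = 1 := by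
    rw [TensorProduct.map_mul, h, ← TensorProduct.map_mul, Units.inv_mul, Units.inv_mul,
      TensorProduct.map_one]
  obtain ⟨q, hq, hA, hB⟩ := exists_eq_smul_one_of_map_eq_one h1
  refine ⟨q, hq, ?_, ?_⟩
  · rw [← Units.mul_inv_cancel_left C A, hA, mul_smul_one]
  · rw [← Units.mul_inv_cancel_left D B, hB, mul_smul_one]

end TensorProduct

theorem swapOp_mul_map_self (m : Module.End ℂ V) :
    swapOp * map m m = map m m * swapOp :=
  TensorProduct.ext' fun _ _ ↦ rfl

theorem map_mul_eq_map_mul_of_commute {f g m : Module.End ℂ V}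
    (h : (map f g * swapOp) * map m m = map m m * (map f g * swapOp)) :
    map (f * m) (g * m) = map (m * f) (m * g) := by
  rw [mul_assoc, swapOp_mul_map_self, ← mul_assoc, ← mul_assoc, ← TensorProduct.map_mul,
    ← TensorProduct.map_mul] at h
  exact (LinearMap.cancel_right (TensorProduct.comm ℂ V V).surjective).mp h

theorem stmt5_general (F G μ : (Module.End ℂ V)ˣ)
    (hcomm : (TensorProduct.map (F : Module.End ℂ V) (G : Module.End ℂ V) * swapOp) *
        TensorProduct.map (μ : Module.End ℂ V) (μ : Module.End ℂ V) =
      TensorProduct.map (μ : Module.End ℂ V) (μ : Module.End ℂ V) *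
        (TensorProduct.map (F : Module.End ℂ V) (G : Module.End ℂ V) * swapOp)) :
    ∃ q : ℂ, q ≠ 0 ∧
      (F : Module.End ℂ V) * μ = q • ((μ : Module.End ℂ V) * F) ∧
      (G : Module.End ℂ V) * μ = q⁻¹ • ((μ : Module.End ℂ V) * G) := by
  cases subsingleton_or_nontrivial V with
  | inl _ => exact ⟨1, one_ne_zero, Subsingleton.elim _ _, Subsingleton.elim _ _⟩
  | inr _ =>
    exact TensorProduct.exists_eq_smul_of_map_eq_map (μ.isUnit.mul F.isUnit)
      (μ.isUnit.mul G.isUnit) (map_mul_eq_map_mul_of_commute hcomm)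

theorem stmt5 [FiniteDimensional ℂ V] (F G μ : (Module.End ℂ V)ˣ)
    (hcomm : (TensorProduct.map (F : Module.End ℂ V) (G : Module.End ℂ V) * swapOp) *
        TensorProduct.map (μ : Module.End ℂ V) (μ : Module.End ℂ V) =
      TensorProduct.map (μ : Module.End ℂ V) (μ : Module.End ℂ V) *
        (TensorProduct.map (F : Module.End ℂ V) (G : Module.End ℂ V) * swapOp)) :
    ∃ q : ℂ, q ≠ 0 ∧
      (F : Module.End ℂ V) * μ = q • ((μ : Module.End ℂ V) * F) ∧
      (G : Module.End ℂ V) * μ = q⁻¹ • ((μ : Module.End ℂ V) * G) :=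
  stmt5_general F G μ hcomm
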